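/- Suppose P and Q each satisfy the quasi-periodicity conditions P(ξ_n−η)·P(ξ_n+iπ) = −P(ξ_n−η+iπ)·P(ξ_n) and Q(ξ_n−η)·Q(ξ_n+iπ) = −Q(ξ_n−η+iπ)·Q(ξ_n) for all n, and assume ξ_i − ξ_j ∉ iπℤ for i ≠ j, p_i − p_j ∉ iπℤ for i ≠ j, ξ_i − p_k ∉ iπℤ, ξ_i − p_k − η ∉ iπℤ, P(ξ_i) ≠ 0, P(ξ_i+iπ) ≠ 0, Q(ξ_i−η) ≠ 0 and Q(ξ_i−η+iπ) ≠ 0 for all i, k. Then for every α ∈ ℂ: S(PQ,α) = ( e^{∑_i (ξ_i − p_i)/2} / 2^N ) · det_{1≤i,k≤N} [ M_{i,k} ] / det_{1≤i,k≤N} [ 1/sinh(ξ_i−p_k) ], where M_{i,k} = 1/sinh((ξ_i−p_k)/2) − i/sinh((ξ_i−p_k+iπ)/2) + α·e^{−η/2}·( f̃(ξ_i)/sinh((ξ_i−p_k−η)/2) − i·f̃(ξ_i+iπ)/sinh((ξ_i−p_k−η+iπ)/2) ). -/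

import Mathlib

open Complex Finset

noncomputable section

def Vand {m : ℕ} (x : Fin m → ℂ) : ℂ :=
  ∏ i : Fin m, ∏ j ∈ Finset.Ioi i, Complex.sinh (x j - x i)

def trigPoly {N : ℕ} (r : Fin N → ℂ) (l : ℂ) : ℂ := ∏ j, Complex.sinh ((l - r j) / 2)
def iπ : ℂ := (Real.pi : ℂ) * Complex.I

/-- the scalar product `S(PQ,α)` of two separate states -/
def SP {N : ℕ} (η : ℂ) (ξ : Fin N → ℂ) (P Q : ℂ → ℂ) (α : ℂ) : ℂ :=
  ∑ h : Fin N → Fin 2,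
    (∏ n, (α * P (ξ n) * Q (ξ n) / (P (ξ n - η) * Q (ξ n - η))) ^ (1 - (h n : ℕ))) *
      Vand (fun n => ξ n - ((1 - (h n : ℕ) : ℕ) : ℂ) * η) / Vand ξ

/-! Each entry of the numerator matrix is `2 e^{-(ξ_i - p_k)/2}` times
`1/sinh(ξ_i - p_k) + α f̃(ξ_i)/sinh(ξ_i - η - p_k)`: indeed
`1/sinh(v/2) - i/sinh((v+iπ)/2) = 2 e^{-v/2}/sinh v`, and `f̃` is `iπ`-periodic at the `ξ_i` by the
quasi-periodicity of `P` and `Q`. The exponentials cancel the prefactor. Expanding the determinant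
row by row over the two summands gives a sum over `h ∈ {0,1}^N` of determinants
`det[1/sinh(y_i - p_k)]` at the shifted points `y = ξ - (1-h)η`. The hyperbolic Cauchy determinant,
`det[1/sinh(x_i - p_k)] · ∏ sinh(x_i - p_k) = K(p) V(x)`, writes the ratio of each of them to the
denominator as `V(y)/V(ξ)` times a product of one-row factors, and
`∏_k sinh(v - p_k) = (-2i)^N P(v) P(v+iπ)` identifies those factors with the weights of `S(PQ,α)`.
-/

open Matrix

section Determinants

variable {R : Type*} [CommRing R]

theorem Matrix.det_of_sum_rows {n ι : Type*} [Fintype n] [DecidableEq n] [Fintype ι]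
    (g : n → ι → n → R) :
    det (of fun i k => ∑ j, g i j k) = ∑ h : n → ι, det (of fun i k => g i (h i) k) := by
  have := (detRowAlternating : (n → R) [⋀^n]→ₗ[R] R).toMultilinearMap.map_sum g
  simp only [Finset.sum_fn] at this
  exact this

theorem Matrix.det_of_mul_left {n : Type*} [Fintype n] [DecidableEq n]
    (a : n → R) (A : n → n → R) :
    det (of fun i k => a i * A i k) = (∏ i, a i) * det (of A) :=
  det_mul_column a (of A)

theorem Matrix.det_of_mul_mul {n : Type*} [Fintype n] [DecidableEq n]
    (a b : n → R) (A : n → n → R) :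
    det (of fun i k => a i * b k * A i k) = (∏ i, a i) * (∏ k, b k) * det (of A) := by
  have : (of fun i k => a i * b k * A i k) = diagonal a * of A * diagonal b := by
    ext i k
    simp [diagonal_mul, mul_diagonal, mul_right_comm]
  rw [this, det_mul, det_mul, det_diagonal, det_diagonal, mul_right_comm]

open Polynomial in
theorem Matrix.det_eval_eq_det_vandermonde_mul {n : ℕ} (v : Fin n → R) (q : Fin n → R[X])
    (hq : ∀ j, (q j).natDegree < n) :
    det (of fun i j => (q j).eval (v i)) =
      det (vandermonde v) * det (of fun i j : Fin n => (q j).coeff i) := by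
  rw [← det_mul]
  congr 1
  ext i j
  rw [of_apply, mul_apply, eval_eq_sum_range' (hq j), ← Fin.sum_univ_eq_sum_range]
  simp only [vandermonde_apply, of_apply, mul_comm]

variable {K : Type*} [Field K]

open Polynomial in
theorem Matrix.exists_det_inv_sub_mul_prod_eq {n : ℕ} (y : Fin n → K)
    (hy : Function.Injective y) :
    ∃ c ≠ 0, ∀ x : Fin n → K, (∀ i k, x i ≠ y k) →
      det (of fun i k => (x i - y k)⁻¹) * ∏ i, ∏ k, (x i - y k) =
        c * ∏ i, ∏ j ∈ Ioi i, (x j - x i) := by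
  set q : Fin n → K[X] := fun j => ∏ k ∈ univ.erase j, (X - C (y k))
  have hq : ∀ j, (q j).natDegree < n := fun j => by
    rw [natDegree_prod _ _ fun k _ => X_sub_C_ne_zero _]
    simp [card_erase_of_mem, j.pos]
  have hdet : ∀ x : Fin n → K, det (of fun i j => ∏ k ∈ univ.erase j, (x i - y k)) =
      (∏ i, ∏ j ∈ Ioi i, (x j - x i)) * det (of fun i j : Fin n => (q j).coeff i) := fun x => by
    rw [← det_vandermonde, ← det_eval_eq_det_vandermonde_mul x q hq]
    simp [q, eval_prod]
  refine ⟨det (of fun i j : Fin n => (q j).coeff i), fun hc => ?_, fun x hx => ?_⟩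
  · -- at `x = y` the matrix of `hdet` is diagonal with nonzero diagonal
    have hdiag : (of fun i j => ∏ k ∈ univ.erase j, (y i - y k)) =
        diagonal fun j => ∏ k ∈ univ.erase j, (y j - y k) := by
      ext i j
      rcases eq_or_ne i j with rfl | hij
      · simp
      · rw [of_apply, diagonal_apply_ne _ hij]
        exact prod_eq_zero (mem_erase.mpr ⟨hij, mem_univ i⟩) (sub_self _)
    have := hdet y
    rw [hdiag, det_diagonal, hc, mul_zero, prod_eq_zero_iff] at this
    obtain ⟨j, -, hj⟩ := this
    obtain ⟨k, hk, hjk⟩ := prod_eq_zero_iff.mp hj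
    exact (mem_erase.mp hk).1 (hy (sub_eq_zero.mp hjk)).symm
  · rw [mul_comm, ← det_mul_column, mul_comm, ← hdet]
    congr 1
    ext i j
    simp only [of_apply]
    rw [← mul_prod_erase univ _ (mem_univ j), mul_comm (x i - y j), mul_assoc,
      mul_inv_cancel₀ (sub_ne_zero.mpr (hx i j)), mul_one]

end Determinants

theorem Fin.prod_Ioi_mul_mul_prod {M : Type*} [CommMonoid M] {n : ℕ} (a : Fin n → M) :
    (∏ i, ∏ j ∈ Ioi i, (a i * a j)) * ∏ i, a i = ∏ i, a i ^ n := by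
  have hswap : ∏ i, ∏ j ∈ Ioi i, a j = ∏ j, ∏ _i ∈ Iio j, a j :=
    prod_comm' fun i j => by simp
  simp only [prod_mul_distrib, hswap]
  rw [← prod_mul_distrib, ← prod_mul_distrib]
  refine prod_congr rfl fun i _ => ?_
  rw [Finset.prod_const, Finset.prod_const, ← pow_add, ← pow_succ, Fin.card_Ioi, Fin.card_Iio]
  congr 1
  omega

theorem sinh_ne_zero_of_forall_ne_int_mul_iπ {u : ℂ} (h : ∀ m : ℤ, u ≠ m * iπ) :
    sinh u ≠ 0 := by
  intro h0
  obtain ⟨k, hk⟩ := sin_eq_zero_iff.mp (by rw [sin_mul_I, h0, zero_mul] : sin (u * I) = 0)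
  apply h (-k)
  rw [iπ]
  push_cast
  linear_combination (-I) * hk + u * I_sq

theorem sinh_half_add_iπ (u : ℂ) : sinh ((u + iπ) / 2) = I * cosh (u / 2) := by
  rw [iπ, add_div, mul_div_right_comm, sinh_add, sinh_mul_I, cosh_mul_I, ← ofReal_ofNat,
    ← ofReal_div, ← ofReal_cos, ← ofReal_sin, Real.cos_pi_div_two, Real.sin_pi_div_two]
  push_cast
  ring

theorem one_div_sinh_half_sub_I_div_sinh_half_add_iπ {v : ℂ} (hv : sinh v ≠ 0) :
    1 / sinh (v / 2) - I / sinh ((v + iπ) / 2) = 2 * exp (-v / 2) / sinh v := by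
  have hv2 : sinh v = 2 * sinh (v / 2) * cosh (v / 2) := by
    rw [← sinh_two_mul, mul_div_cancel₀ v two_ne_zero]
  have hs : sinh (v / 2) ≠ 0 := fun h => hv (by rw [hv2, h, mul_zero, zero_mul])
  have hc : cosh (v / 2) ≠ 0 := fun h => hv (by rw [hv2, h, mul_zero])
  rw [sinh_half_add_iπ, hv2, neg_div, ← cosh_sub_sinh]
  field_simp

theorem exp_two_mul_sub_exp_two_mul (u v : ℂ) :
    exp (2 * u) - exp (2 * v) = 2 * exp u * exp v * sinh (u - v) := by
  rw [sinh, exp_sub, exp_neg, exp_sub, two_mul, two_mul, exp_add, exp_add]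
  field_simp

theorem exists_det_inv_sinh_sub_mul_prod_eq {n : ℕ} (p : Fin n → ℂ)
    (hp : ∀ i j, i ≠ j → sinh (p i - p j) ≠ 0) :
    ∃ K ≠ 0, ∀ x : Fin n → ℂ, (∀ i k, sinh (x i - p k) ≠ 0) →
      det (of fun i k => (sinh (x i - p k))⁻¹) * ∏ i, ∏ k, sinh (x i - p k) = K * Vand x := by
  have hexp : ∀ u v, exp (2 * u) - exp (2 * v) ≠ 0 ↔ sinh (u - v) ≠ 0 := fun u v => by
    simp [exp_two_mul_sub_exp_two_mul, exp_ne_zero]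
  -- substitute `e^{2x_i}`, `e^{2p_k}` into the rational Cauchy determinant: the resulting powers
  -- of `e^{x_i}` cancel by `Fin.prod_Ioi_mul_mul_prod`
  obtain ⟨c, hc, hcauchy⟩ := exists_det_inv_sub_mul_prod_eq (fun k => exp (2 * p k))
    fun i j hij => by_contra fun hne => (hexp _ _).mpr (hp i j hne) (sub_eq_zero.mpr hij)
  set B := (∏ k, 2 * exp (p k)) ^ n
  set T := ∏ i : Fin n, ∏ _j ∈ Ioi i, (2 : ℂ)
  have hB : B ≠ 0 := pow_ne_zero _ (prod_ne_zero_iff.mpr fun k _ => by simp [exp_ne_zero])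
  have hT : T ≠ 0 := prod_ne_zero_iff.mpr fun i _ => prod_ne_zero_iff.mpr fun _ _ => two_ne_zero
  have hexpp : ∏ k, exp (p k) ≠ 0 := prod_ne_zero_iff.mpr fun k _ => exp_ne_zero _
  refine ⟨2 ^ n * (∏ k, exp (p k)) * c * T / B, by simp [hB, hT, hc, hexpp], fun x hx => ?_⟩
  have hdet : det (of fun i k => (sinh (x i - p k))⁻¹) = (∏ i, 2 * exp (x i)) *
      (∏ k, exp (p k)) * det (of fun i k => (exp (2 * x i) - exp (2 * p k))⁻¹) := by
    rw [← det_of_mul_mul]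
    congr 1
    ext i k
    rw [of_apply, of_apply, exp_two_mul_sub_exp_two_mul]
    field_simp [exp_ne_zero]
  have hprod : ∏ i, ∏ k, (exp (2 * x i) - exp (2 * p k)) =
      (∏ i, exp (x i) ^ n) * B * ∏ i, ∏ k, sinh (x i - p k) := by
    simp only [B, exp_two_mul_sub_exp_two_mul, prod_mul_distrib, prod_const, card_univ,
      Fintype.card_fin]
    ring
  have hvand : ∏ i, ∏ j ∈ Ioi i, (exp (2 * x j) - exp (2 * x i)) =
      T * (∏ i, ∏ j ∈ Ioi i, (exp (x i) * exp (x j))) * Vand x := by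
    simp only [T, Vand, exp_two_mul_sub_exp_two_mul, prod_mul_distrib]
    ring
  have hpairs := Fin.prod_Ioi_mul_mul_prod fun i => exp (x i)
  have h := hcauchy (fun i => exp (2 * x i)) fun i k => sub_ne_zero.mp ((hexp _ _).mpr (hx i k))
  rw [hprod, hvand, ← hpairs] at h
  have hexpx : ∏ i, exp (x i) ^ n ≠ 0 :=
    prod_ne_zero_iff.mpr fun i _ => pow_ne_zero _ (exp_ne_zero _)
  rw [div_mul_eq_mul_div, eq_div_iff hB]
  apply mul_right_cancel₀ hexpx
  rw [hdet, ← hpairs, prod_mul_distrib, prod_const, card_univ, Fintype.card_fin]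
  linear_combination (2 ^ n * (∏ k, exp (p k)) * ∏ i, exp (x i)) * h

theorem det_mul_inv_sinh_sub_div_det_inv_sinh_sub {n : ℕ} (p : Fin n → ℂ)
    (hp : ∀ i j, i ≠ j → sinh (p i - p j) ≠ 0) (w x y : Fin n → ℂ)
    (hx : ∀ i k, sinh (x i - p k) ≠ 0) (hy : ∀ i k, sinh (y i - p k) ≠ 0) (hVx : Vand x ≠ 0) :
    det (of fun i k => w i * (sinh (y i - p k))⁻¹) / det (of fun i k => (sinh (x i - p k))⁻¹) =
      (∏ i, w i * (∏ k, sinh (x i - p k)) / ∏ k, sinh (y i - p k)) * (Vand y / Vand x) := by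
  obtain ⟨K, hK, hcauchy⟩ := exists_det_inv_sinh_sub_mul_prod_eq p hp
  have hSx : ∏ i, ∏ k, sinh (x i - p k) ≠ 0 :=
    prod_ne_zero_iff.mpr fun i _ => prod_ne_zero_iff.mpr fun k _ => hx i k
  have hSy : ∏ i, ∏ k, sinh (y i - p k) ≠ 0 :=
    prod_ne_zero_iff.mpr fun i _ => prod_ne_zero_iff.mpr fun k _ => hy i k
  rw [det_of_mul_left, eq_div_of_mul_eq hSx (hcauchy x hx), eq_div_of_mul_eq hSy (hcauchy y hy),
    prod_div_distrib, prod_mul_distrib]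
  field_simp

section DoublePeriod

variable {N : ℕ}

theorem trigPoly_add_two_mul_iπ (r : Fin N → ℂ) (l : ℂ) :
    trigPoly r (l + 2 * iπ) = (-1) ^ N * trigPoly r l := by
  have h : ∀ j, sinh ((l + 2 * iπ - r j) / 2) = -sinh ((l - r j) / 2) := fun j => by
    rw [show (l + 2 * iπ - r j) / 2 = (l - r j) / 2 + iπ by ring, iπ, sinh_add_pi_mul_I]
  simp only [trigPoly, h, prod_neg, card_univ, Fintype.card_fin]

theorem prod_sinh_sub_eq_trigPoly_mul (r : Fin N → ℂ) (v : ℂ) :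
    ∏ k, sinh (v - r k) = (-(2 * I)) ^ N * trigPoly r v * trigPoly r (v + iπ) := by
  have h : ∀ k, sinh (v - r k) =
      -(2 * I) * (sinh ((v - r k) / 2) * sinh ((v + iπ - r k) / 2)) := fun k => by
    rw [show v + iπ - r k = v - r k + iπ by ring, sinh_half_add_iπ, ← mul_div_cancel₀ (v - r k)
      (two_ne_zero' ℂ), sinh_two_mul, mul_div_cancel₀ _ (two_ne_zero' ℂ)]
    ring_nf
    rw [I_sq]
    ring
  simp only [trigPoly, h, prod_mul_distrib, prod_const, card_univ, Fintype.card_fin, mul_assoc]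

def fTilde (P Q : ℂ → ℂ) (η u : ℂ) : ℂ := P (u - η + iπ) * Q u / (P (u + iπ) * Q (u - η))

theorem fTilde_add_iπ {P Q : ℂ → ℂ} {η u ε : ℂ} (hε : ε ≠ 0)
    (hP : ∀ x, P (x + 2 * iπ) = ε * P x)
    (hPper : P (u - η) * P (u + iπ) = -(P (u - η + iπ) * P u))
    (hQper : Q (u - η) * Q (u + iπ) = -(Q (u - η + iπ) * Q u))
    (hPu : P u ≠ 0) (hPuπ : P (u + iπ) ≠ 0) (hQuη : Q (u - η) ≠ 0)
    (hQuηπ : Q (u - η + iπ) ≠ 0) :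
    fTilde P Q η (u + iπ) = fTilde P Q η u := by
  rw [fTilde, fTilde, show u + iπ - η + iπ = u - η + 2 * iπ by ring,
    show u + iπ + iπ = u + 2 * iπ by ring, hP, hP, show u + iπ - η = u - η + iπ by ring,
    div_eq_div_iff (by simp [*]) (mul_ne_zero hPuπ hQuη)]
  linear_combination ε * (Q (u - η) * Q (u + iπ) * hPper - P (u - η + iπ) * P u * hQper)

theorem fTilde_mul_prod_sinh_sub (p : Fin N → ℂ) {Q : ℂ → ℂ} {η u : ℂ}
    (hPη : trigPoly p (u - η) ≠ 0) (hQη : Q (u - η) ≠ 0) (hPπ : trigPoly p (u + iπ) ≠ 0) :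
    fTilde (trigPoly p) Q η u * ∏ k, sinh (u - p k) =
      trigPoly p u * Q u / (trigPoly p (u - η) * Q (u - η)) * ∏ k, sinh (u - η - p k) := by
  rw [prod_sinh_sub_eq_trigPoly_mul, prod_sinh_sub_eq_trigPoly_mul, fTilde]
  field_simp

theorem exp_div_pow_mul_det_eq_det_inv_sinh_add (η α : ℂ) (x p : Fin N → ℂ) (f : ℂ → ℂ)
    (hf : ∀ i, f (x i + iπ) = f (x i)) (hxp : ∀ i k, sinh (x i - p k) ≠ 0)
    (hxηp : ∀ i k, sinh (x i - η - p k) ≠ 0) :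
    exp (∑ i, (x i - p i) / 2) / 2 ^ N *
        det (of fun i k => 1 / sinh ((x i - p k) / 2) - I / sinh ((x i - p k + iπ) / 2) +
          α * exp (-η / 2) * (f (x i) / sinh ((x i - p k - η) / 2) -
            I * f (x i + iπ) / sinh ((x i - p k - η + iπ) / 2))) =
      det (of fun i k => (sinh (x i - p k))⁻¹ + α * f (x i) * (sinh (x i - η - p k))⁻¹) := by
  have hentry : ∀ i k,
      1 / sinh ((x i - p k) / 2) - I / sinh ((x i - p k + iπ) / 2) +
        α * exp (-η / 2) * (f (x i) / sinh ((x i - p k - η) / 2) -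
          I * f (x i + iπ) / sinh ((x i - p k - η + iπ) / 2)) =
      2 * exp (-x i / 2) * exp (p k / 2) *
        ((sinh (x i - p k))⁻¹ + α * f (x i) * (sinh (x i - η - p k))⁻¹) := fun i k => by
    have h := one_div_sinh_half_sub_I_div_sinh_half_add_iπ (hxp i k)
    have hη := one_div_sinh_half_sub_I_div_sinh_half_add_iπ
      (sub_right_comm (x i) η (p k) ▸ hxηp i k)
    have e : exp (-(x i - p k) / 2) = exp (-x i / 2) * exp (p k / 2) := by
      rw [← exp_add]; ring_nf
    rw [sub_right_comm (x i) η (p k)]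
    have eη : exp (-η / 2) * exp (-(x i - p k - η) / 2) = exp (-x i / 2) * exp (p k / 2) := by
      rw [← exp_add, ← exp_add]; ring_nf
    rw [hf]
    linear_combination h + α * exp (-η / 2) * f (x i) * hη + 2 * (sinh (x i - p k))⁻¹ * e +
      2 * α * f (x i) * (sinh (x i - p k - η))⁻¹ * eη
  have hpref : exp (∑ i, (x i - p i) / 2) / 2 ^ N *
      ((∏ i, 2 * exp (-x i / 2)) * ∏ k, exp (p k / 2)) = 1 := by
    rw [← prod_mul_distrib, prod_congr rfl fun i _ => (show 2 * exp (-x i / 2) * exp (p i / 2) =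
      2 * exp (-((x i - p i) / 2)) by rw [mul_assoc, ← exp_add]; ring_nf), prod_mul_distrib,
      prod_const, card_univ, Fintype.card_fin, ← exp_sum, sum_neg_distrib, exp_neg]
    field_simp
  simp_rw [hentry]
  rw [det_of_mul_mul, ← mul_assoc, hpref, one_mul]

theorem det_inv_sinh_add_eq_sum (η α : ℂ) (x p : Fin N → ℂ) (f : ℂ → ℂ) :
    det (of fun i k => (sinh (x i - p k))⁻¹ + α * f (x i) * (sinh (x i - η - p k))⁻¹) =
      ∑ h : Fin N → Fin 2, det (of fun i k => (α * f (x i)) ^ (1 - (h i : ℕ)) *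
        (sinh (x i - ((1 - (h i : ℕ) : ℕ) : ℂ) * η - p k))⁻¹) := by
  rw [← det_of_sum_rows fun i (j : Fin 2) k => (α * f (x i)) ^ (1 - (j : ℕ)) *
    (sinh (x i - ((1 - (j : ℕ) : ℕ) : ℂ) * η - p k))⁻¹]
  congr 1
  ext i k
  simp [Fin.sum_univ_two, add_comm]

theorem fTilde_pow_mul_prod_sinh_div (p : Fin N → ℂ) {Q : ℂ → ℂ} {η u : ℂ} (α : ℂ) (j : Fin 2)
    (hPη : trigPoly p (u - η) ≠ 0) (hQη : Q (u - η) ≠ 0) (hPπ : trigPoly p (u + iπ) ≠ 0)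
    (hu : ∀ k, sinh (u - p k) ≠ 0) (huη : ∀ k, sinh (u - η - p k) ≠ 0) :
    (α * fTilde (trigPoly p) Q η u) ^ (1 - (j : ℕ)) * (∏ k, sinh (u - p k)) /
        ∏ k, sinh (u - ((1 - (j : ℕ) : ℕ) : ℂ) * η - p k) =
      (α * trigPoly p u * Q u / (trigPoly p (u - η) * Q (u - η))) ^ (1 - (j : ℕ)) := by
  fin_cases j
  · simp only [Nat.sub_zero, pow_one, Nat.cast_one, one_mul]
    rw [div_eq_iff (prod_ne_zero_iff.mpr fun k _ => huη k), mul_assoc,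
      fTilde_mul_prod_sinh_sub p hPη hQη hPπ]
    ring
  · simp [prod_ne_zero_iff, hu]

end DoublePeriod

theorem scalar_product_double_period_general (N : ℕ) (η : ℂ)
    (ξ p : Fin N → ℂ) (P Q ftil : ℂ → ℂ)
    (hP : P = trigPoly p)
    (hftil : ftil = fun u => P (u - η + iπ) * Q u / (P (u + iπ) * Q (u - η)))
    (hV : Vand ξ ≠ 0)
    (hPQξ : ∀ n, P (ξ n - η) * Q (ξ n - η) ≠ 0)
    (hPper : ∀ n, P (ξ n - η) * P (ξ n + iπ) = -(P (ξ n - η + iπ) * P (ξ n)))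
    (hQper : ∀ n, Q (ξ n - η) * Q (ξ n + iπ) = -(Q (ξ n - η + iπ) * Q (ξ n)))
    (hpp : ∀ i j, i ≠ j → ∀ m : ℤ, p i - p j ≠ (m : ℂ) * iπ)
    (hξp : ∀ i k, ∀ m : ℤ, ξ i - p k ≠ (m : ℂ) * iπ)
    (hξpη : ∀ i k, ∀ m : ℤ, ξ i - p k - η ≠ (m : ℂ) * iπ)
    (hPξ : ∀ i, P (ξ i) ≠ 0)
    (hPξπ : ∀ i, P (ξ i + iπ) ≠ 0)
    (hQξηπ : ∀ i, Q (ξ i - η + iπ) ≠ 0)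
    (α : ℂ) :
    SP η ξ P Q α =
      (Complex.exp (∑ i, (ξ i - p i) / 2) / 2 ^ N) *
        Matrix.det (Matrix.of (fun i k : Fin N =>
          1 / Complex.sinh ((ξ i - p k) / 2) -
            Complex.I / Complex.sinh ((ξ i - p k + iπ) / 2) +
            α * Complex.exp (-η / 2) *
              (ftil (ξ i) / Complex.sinh ((ξ i - p k - η) / 2) -
                Complex.I * ftil (ξ i + iπ) /
                  Complex.sinh ((ξ i - p k - η + iπ) / 2)))) /
        Matrix.det (Matrix.of (fun i k : Fin N => 1 / Complex.sinh (ξ i - p k))) := by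
  subst hP
  obtain rfl : ftil = fTilde (trigPoly p) Q η := hftil
  have hsinh : ∀ i k, sinh (ξ i - p k) ≠ 0 := fun i k =>
    sinh_ne_zero_of_forall_ne_int_mul_iπ (hξp i k)
  have hsinhη : ∀ i k, sinh (ξ i - η - p k) ≠ 0 := fun i k =>
    sinh_ne_zero_of_forall_ne_int_mul_iπ (sub_right_comm (ξ i) (p k) η ▸ hξpη i k)
  have hper : ∀ i, fTilde (trigPoly p) Q η (ξ i + iπ) = fTilde (trigPoly p) Q η (ξ i) := fun i =>
    fTilde_add_iπ (pow_ne_zero N (neg_ne_zero.mpr one_ne_zero)) (trigPoly_add_two_mul_iπ p)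
      (hPper i) (hQper i) (hPξ i) (hPξπ i) (right_ne_zero_of_mul (hPQξ i)) (hQξηπ i)
  have hshift : ∀ (j : Fin 2) i k, sinh (ξ i - ((1 - (j : ℕ) : ℕ) : ℂ) * η - p k) ≠ 0 := by
    intro j i k; fin_cases j <;> simp [hsinh, hsinhη]
  rw [exp_div_pow_mul_det_eq_det_inv_sinh_add η α ξ p _ hper hsinh hsinhη,
    det_inv_sinh_add_eq_sum]
  simp only [one_div]
  rw [sum_div, SP]
  refine sum_congr rfl fun h _ => ?_
  rw [det_mul_inv_sinh_sub_div_det_inv_sinh_sub p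
    (fun i j hij => sinh_ne_zero_of_forall_ne_int_mul_iπ (hpp i j hij)) _ ξ _ hsinh
    (fun i => hshift (h i) i) hV, mul_div_assoc]
  refine congrArg (· * _) (prod_congr rfl fun i _ => ?_)
  exact (fTilde_pow_mul_prod_sinh_div p α (h i) (left_ne_zero_of_mul (hPQξ i))
    (right_ne_zero_of_mul (hPQξ i)) (hPξπ i) (hsinh i) (hsinhη i)).symm

/-- Intermediate representation (5.19) of the scalar product in
terms of functions of double period (Identity 3, first formula). -/
theorem scalar_product_double_period (N : ℕ) (hN : 1 ≤ N) (η : ℂ)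
    (ξ p q : Fin N → ℂ) (P Q ftil : ℂ → ℂ)
    (hP : P = trigPoly p) (hQ : Q = trigPoly q)
    (hftil : ftil = fun u => P (u - η + iπ) * Q u / (P (u + iπ) * Q (u - η)))
    (hV : Vand ξ ≠ 0)
    (hPQξ : ∀ n, P (ξ n - η) * Q (ξ n - η) ≠ 0)
    (hPper : ∀ n, P (ξ n - η) * P (ξ n + iπ) = -(P (ξ n - η + iπ) * P (ξ n)))
    (hQper : ∀ n, Q (ξ n - η) * Q (ξ n + iπ) = -(Q (ξ n - η + iπ) * Q (ξ n)))
    (hξξ : ∀ i j, i ≠ j → ∀ m : ℤ, ξ i - ξ j ≠ (m : ℂ) * iπ)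
    (hpp : ∀ i j, i ≠ j → ∀ m : ℤ, p i - p j ≠ (m : ℂ) * iπ)
    (hξp : ∀ i k, ∀ m : ℤ, ξ i - p k ≠ (m : ℂ) * iπ)
    (hξpη : ∀ i k, ∀ m : ℤ, ξ i - p k - η ≠ (m : ℂ) * iπ)
    (hPξ : ∀ i, P (ξ i) ≠ 0)
    (hPξπ : ∀ i, P (ξ i + iπ) ≠ 0)
    (hQξη : ∀ i, Q (ξ i - η) ≠ 0)
    (hQξηπ : ∀ i, Q (ξ i - η + iπ) ≠ 0)
    (α : ℂ) :
    SP η ξ P Q α =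
      (Complex.exp (∑ i, (ξ i - p i) / 2) / 2 ^ N) *
        Matrix.det (Matrix.of (fun i k : Fin N =>
          1 / Complex.sinh ((ξ i - p k) / 2) -
            Complex.I / Complex.sinh ((ξ i - p k + iπ) / 2) +
            α * Complex.exp (-η / 2) *
              (ftil (ξ i) / Complex.sinh ((ξ i - p k - η) / 2) -
                Complex.I * ftil (ξ i + iπ) /
                  Complex.sinh ((ξ i - p k - η + iπ) / 2)))) /
        Matrix.det (Matrix.of (fun i k : Fin N => 1 / Complex.sinh (ξ i - p k))) :=
  scalar_product_double_period_general N η ξ p P Q ftil hP hftil hV hPQξ hPper hQper hpp hξp hξpη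
    hPξ hPξπ hQξηπ α
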